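/- Let Γ be a weighted congestion game fulfilling Conditions 1–2, Γ̂ its Ψ̂-game, and ε ∈ (0,1). Suppose the profile S^(t) is not a 1/(1−ε)-approximate pure Nash equilibrium of Γ̂ and S^(t+1) is obtained from S^(t) by an Algorithm 1 step with chosen player u_t and best response s_{u_t}*. Then for every player u ∈ 𝒩, ĉ_{u_t}(S^(t)) − ĉ_{u_t}(s_{u_t}*, S^(t)_{−u_t}) ≥ (ε/μ)·ĉ_u(S^(t)), where μ = E·A·(1+d)!·N^d·W^{d+1}. -/

import Mathlib

/-- `hpoly k l` is the complete homogeneous symmetric polynomial of degree `k`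
evaluated at the entries of the list `l`, i.e. the sum of all monomials of
total degree `k` in the elements of `l`. -/
noncomputable def hpoly : ℕ → List ℝ → ℝ
  | 0, _ => 1
  | _ + 1, [] => 0
  | k + 1, a :: l => a * hpoly k (a :: l) + hpoly (k + 1) l
termination_by k l => (k, l.length)

/-- The `k`-order `Ψ̂`-function of a multiset `M` of reals:
`Ψ̂_k(M) = k! ·` (sum of all monomials of total degree `k` in the elements of `M`).
In particular `Ψ̂_0(M) = 1` and `Ψ̂_k(∅) = 0` for `k ≥ 1`. -/
noncomputable def psiHat (k : ℕ) (M : Multiset ℝ) : ℝ :=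
  (Nat.factorial k : ℝ) * hpoly k M.toList

/-- A weighted congestion game with `N` players, `E` resources, polynomial latency
functions of degree at most `d` (Condition 2, with coefficient-ratio bound `A`),
and players' weights in `[1, W]` (Condition 1). -/
structure WCGame (N E d : ℕ) (W A : ℝ) where
  /-- the strategy set of each player: a set of nonempty subsets of resources -/
  strat : Fin N → Set (Finset (Fin E))
  strat_nonempty : ∀ u, (strat u).Nonempty
  strat_valid : ∀ u, ∀ s ∈ strat u, s.Nonempty
  /-- the weight of each player -/
  w : Fin N → ℝ
  /-- `a e k` is the coefficient of `x^k` in the latency function of resource `e` -/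
  a : Fin E → ℕ → ℝ
  hd : 1 ≤ d
  hW : 1 ≤ W
  hw_lower : ∀ u, 1 ≤ w u
  hw_upper : ∀ u, w u ≤ W
  ha_nonneg : ∀ e k, 0 ≤ a e k
  ha_pos : ∀ e, 0 < ∑ k ∈ Finset.range (d + 1), a e k
  hA_pos : 0 < A
  hA_bound : ∀ e e' k k', k ≤ d → k' ≤ d → 0 < a e k → a e' k' ≤ A * a e k

namespace WCGame

/-- A (pure strategy) profile: a choice of a set of resources for every player. -/
abbrev Profile (N E : ℕ) := Fin N → Finset (Fin E)

variable {N E d : ℕ} {W A : ℝ}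

/-- A profile is feasible if every player uses one of her strategies. -/
def IsProfile (G : WCGame N E d W A) (S : Profile N E) : Prop :=
  ∀ u, S u ∈ G.strat u

/-- `U_e(S)`: the multiset of weights of the players using resource `e` in profile `S`. -/
noncomputable def load (G : WCGame N E d W A) (S : Profile N E) (e : Fin E) : Multiset ℝ :=
  (Finset.univ.filter (fun u => e ∈ S u)).val.map G.w

/-- The cost `c_u(S) = w_u · ∑_{e ∈ s_u} ∑_{k=0}^d a_{e,k} · L(U_e(S))^k` of player `u`
in the original game `Γ`. -/
noncomputable def cost (G : WCGame N E d W A) (S : Profile N E) (u : Fin N) : ℝ :=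
  G.w u * ∑ e ∈ S u, ∑ k ∈ Finset.range (d + 1), G.a e k * (G.load S e).sum ^ k

/-- The cost `ĉ_u(S) = w_u · ∑_{e ∈ s_u} ∑_{k=0}^d a_{e,k} · Ψ̂_k(U_e(S))` of player `u`
in the `Ψ̂`-game `Γ̂`. -/
noncomputable def hcost (G : WCGame N E d W A) (S : Profile N E) (u : Fin N) : ℝ :=
  G.w u * ∑ e ∈ S u, ∑ k ∈ Finset.range (d + 1), G.a e k * psiHat k (G.load S e)

/-- The potential function `Φ̂(S) = ∑_e ∑_{k=0}^d (a_{e,k}/(k+1)) · Ψ̂_{k+1}(U_e(S))`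
of the `Ψ̂`-game. -/
noncomputable def potHat (G : WCGame N E d W A) (S : Profile N E) : ℝ :=
  ∑ e : Fin E, ∑ k ∈ Finset.range (d + 1),
    G.a e k / ((k : ℝ) + 1) * psiHat (k + 1) (G.load S e)

/-- The approximate potential function `Φ(S) = ∑_e Ψ_e(L(U_e(S)))` with
`Ψ_e(x) = a_{e,0}·x + ∑_{k=1}^d a_{e,k}·(x^{k+1}/(k+1) + x^k/2)`. -/
noncomputable def pot (G : WCGame N E d W A) (S : Profile N E) : ℝ :=
  ∑ e : Fin E,
    (G.a e 0 * (G.load S e).sum +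
      ∑ k ∈ Finset.Icc 1 d,
        G.a e k * ((G.load S e).sum ^ (k + 1) / ((k : ℝ) + 1) + (G.load S e).sum ^ k / 2))

/-- `S` is a `ρ`-approximate pure Nash equilibrium w.r.t. the player costs `costFn`:
no player can decrease her cost by more than a factor `ρ` by a unilateral deviation. -/
def IsApproxPNE (G : WCGame N E d W A) (costFn : Profile N E → Fin N → ℝ) (ρ : ℝ)
    (S : Profile N E) : Prop :=
  ∀ u, ∀ s' ∈ G.strat u, costFn S u ≤ ρ * costFn (Function.update S u s') u

/-- `sstar u` is a best response of player `u` to `S₋ᵤ` w.r.t. the costs `costFn`. -/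
def IsBestResponses (G : WCGame N E d W A) (costFn : Profile N E → Fin N → ℝ)
    (S : Profile N E) (sstar : Fin N → Finset (Fin E)) : Prop :=
  ∀ u, sstar u ∈ G.strat u ∧
    ∀ s ∈ G.strat u, costFn (Function.update S u (sstar u)) u ≤ costFn (Function.update S u s) u

/-- One step of Algorithm 1 (the `1/(1-ε)` best response dynamic on the `Ψ̂`-game),
moving from profile `S` to profile `S'` by letting the chosen player `ut` (a player with a
`1/(1-ε)`-move of maximum cost reduction) switch to her best response `sstar ut`. -/
def AlgOneStep (G : WCGame N E d W A) (ε : ℝ) (S S' : Profile N E) (ut : Fin N)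
    (sstar : Fin N → Finset (Fin E)) : Prop :=
  G.IsBestResponses G.hcost S sstar ∧
  G.hcost S ut > (1 / (1 - ε)) * G.hcost (Function.update S ut (sstar ut)) ut ∧
  (∀ u, G.hcost S u > (1 / (1 - ε)) * G.hcost (Function.update S u (sstar u)) u →
    G.hcost S ut - G.hcost (Function.update S ut (sstar ut)) ut ≥
      G.hcost S u - G.hcost (Function.update S u (sstar u)) u) ∧
  S' = Function.update S ut (sstar ut)

/-- One step of Algorithm 2 (the refined `ρ/(1-ε)` best response dynamic on `Γ`),
moving from profile `S` to profile `S'` by letting the chosen player `ut` (a player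
maximizing `c_u(S) - ρ·c_u(s_u^*, S₋ᵤ)` among players with `ρ/(1-ε)`-moves) switch to
her best response `sstar ut`. -/
def AlgTwoStep (G : WCGame N E d W A) (ρ ε : ℝ) (S S' : Profile N E) (ut : Fin N)
    (sstar : Fin N → Finset (Fin E)) : Prop :=
  G.IsBestResponses G.cost S sstar ∧
  G.cost S ut > (ρ / (1 - ε)) * G.cost (Function.update S ut (sstar ut)) ut ∧
  (∀ u, G.cost S u > (ρ / (1 - ε)) * G.cost (Function.update S u (sstar u)) u →
    G.cost S ut - ρ * G.cost (Function.update S ut (sstar ut)) ut ≥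
      G.cost S u - ρ * G.cost (Function.update S u (sstar u)) u) ∧
  S' = Function.update S ut (sstar ut)

/-- `c_max`: the maximum cost of a player over all (feasible) profiles in `Γ`. -/
noncomputable def cMax (G : WCGame N E d W A) : ℝ :=
  sSup {x | ∃ S u, G.IsProfile S ∧ x = G.cost S u}

/-- `ĉ_max`: the maximum cost of a player over all (feasible) profiles in `Γ̂`. -/
noncomputable def hcMax (G : WCGame N E d W A) : ℝ :=
  sSup {x | ∃ S u, G.IsProfile S ∧ x = G.hcost S u}

/-- `Φ̂_min`: the minimum of the potential `Φ̂` over all (feasible) profiles. -/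
noncomputable def potHatMin (G : WCGame N E d W A) : ℝ :=
  sInf {x | ∃ S, G.IsProfile S ∧ x = G.potHat S}

/-- `a_min⁺`: the minimum positive coefficient of the latency functions. -/
noncomputable def aMinPos (G : WCGame N E d W A) : ℝ :=
  sInf {x | 0 < x ∧ ∃ e k, k ≤ d ∧ x = G.a e k}

end WCGame

/-!
The chosen player `u_t` improves by a factor `1/(1-ε)`, so her decrement is at least
`ε·ĉ_{u_t}(S)`. Some resource `e ∈ s_{u_t}` has a positive coefficient `a_{e,k}`, and `Ψ̂_k` of a
load containing a weight `≥ 1` is `≥ 1`, so `ĉ_{u_t}(S) ≥ a_{e,k}`. Conversely, Condition 2 gives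
`a_{e',k'} ≤ A·a_{e,k}` and `Ψ̂_{k'}(U) ≤ k'!·(ΣU)^{k'} ≤ d!·(NW)^d`, so summing over at most
`d + 1` degrees and `E` resources, every cost `ĉ_u(S)` is at most `μ·a_{e,k}`.
-/

theorem hpoly_nonneg : ∀ (k : ℕ) (l : List ℝ), (∀ x ∈ l, 0 ≤ x) → 0 ≤ hpoly k l
  | 0, l, _ => by rw [hpoly]; exact zero_le_one
  | k + 1, [], _ => by rw [hpoly]
  | k + 1, a :: l, h => by
    have := hpoly_nonneg k (a :: l) h
    have := hpoly_nonneg (k + 1) l fun x hx => h x (List.mem_cons_of_mem _ hx)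
    have := h a List.mem_cons_self
    rw [hpoly]
    positivity
  termination_by k l => (k, l.length)

theorem pow_le_hpoly : ∀ (k : ℕ) (l : List ℝ) {x : ℝ}, (∀ y ∈ l, 0 ≤ y) → x ∈ l →
    x ^ k ≤ hpoly k l
  | 0, l, x, _, _ => by rw [hpoly, pow_zero]
  | k + 1, a :: l, x, h, hx => by
    have hl : ∀ y ∈ l, 0 ≤ y := fun y hy => h y (List.mem_cons_of_mem _ hy)
    have ha := h a List.mem_cons_self
    have htail := hpoly_nonneg (k + 1) l hl
    rw [hpoly]
    rcases List.mem_cons.1 hx with rfl | hx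
    · have := pow_le_hpoly k (x :: l) h List.mem_cons_self
      rw [pow_succ']
      nlinarith
    · have := pow_le_hpoly (k + 1) l hl hx
      have := hpoly_nonneg k (a :: l) h
      nlinarith
  termination_by k l => (k, l.length)

theorem hpoly_le_sum_pow : ∀ (k : ℕ) (l : List ℝ), (∀ y ∈ l, 0 ≤ y) →
    hpoly k l ≤ l.sum ^ k
  | 0, l, _ => by rw [hpoly, pow_zero]
  | k + 1, [], _ => by rw [hpoly]; simp
  | k + 1, a :: l, h => by
    have ha := h a List.mem_cons_self
    have hl : ∀ y ∈ l, 0 ≤ y := fun y hy => h y (List.mem_cons_of_mem _ hy)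
    have hs : 0 ≤ l.sum := List.sum_nonneg hl
    have hhead := hpoly_le_sum_pow k (a :: l) h
    have htail := hpoly_le_sum_pow (k + 1) l hl
    rw [List.sum_cons] at hhead
    have hpow : l.sum ^ k ≤ (a + l.sum) ^ k := pow_le_pow_left₀ hs (by linarith) k
    rw [hpoly, List.sum_cons]
    calc a * hpoly k (a :: l) + hpoly (k + 1) l
        ≤ a * (a + l.sum) ^ k + l.sum * (a + l.sum) ^ k := by
          rw [pow_succ'] at htail
          gcongr
          exact htail.trans (mul_le_mul_of_nonneg_left hpow hs)
      _ = (a + l.sum) ^ (k + 1) := by ring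
  termination_by k l => (k, l.length)

section PsiHat

variable {M : Multiset ℝ} (k : ℕ)

theorem psiHat_nonneg (hM : ∀ x ∈ M, 0 ≤ x) : 0 ≤ psiHat k M :=
  mul_nonneg (Nat.cast_nonneg _) (hpoly_nonneg k _ fun x hx => hM x (Multiset.mem_toList.1 hx))

theorem one_le_psiHat {x : ℝ} (hM : ∀ y ∈ M, 0 ≤ y) (hx : x ∈ M) (hx1 : 1 ≤ x) :
    1 ≤ psiHat k M := by
  have hpow : x ^ k ≤ hpoly k M.toList :=
    pow_le_hpoly k _ (fun y hy => hM y (Multiset.mem_toList.1 hy)) (Multiset.mem_toList.2 hx)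
  exact one_le_mul_of_one_le_of_one_le (Nat.one_le_cast.2 (Nat.factorial_pos k))
    ((one_le_pow₀ hx1).trans hpow)

theorem psiHat_le_factorial_mul_sum_pow (hM : ∀ x ∈ M, 0 ≤ x) :
    psiHat k M ≤ Nat.factorial k * M.sum ^ k := by
  have := hpoly_le_sum_pow k M.toList fun x hx => hM x (Multiset.mem_toList.1 hx)
  rw [Multiset.sum_toList] at this
  exact mul_le_mul_of_nonneg_left this (Nat.cast_nonneg _)

end PsiHat

namespace WCGame

variable {N E d : ℕ} {W A : ℝ} (G : WCGame N E d W A) (S : Profile N E)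

/-- The latency `ĉ_e(S)` of resource `e` in the `Ψ̂`-game. -/
noncomputable def hlatency (e : Fin E) : ℝ :=
  ∑ k ∈ Finset.range (d + 1), G.a e k * psiHat k (G.load S e)

theorem hcost_eq (u : Fin N) : G.hcost S u = G.w u * ∑ e ∈ S u, G.hlatency S e := rfl

theorem load_nonneg (e : Fin E) : ∀ x ∈ G.load S e, 0 ≤ x := by
  intro x hx
  obtain ⟨v, -, rfl⟩ := Multiset.mem_map.1 hx
  exact zero_le_one.trans (G.hw_lower v)

theorem w_mem_load {e : Fin E} {u : Fin N} (h : e ∈ S u) : G.w u ∈ G.load S e :=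
  Multiset.mem_map.2 ⟨u, by simp [h], rfl⟩

theorem load_sum_le (e : Fin E) : (G.load S e).sum ≤ N * W := by
  change ∑ v ∈ Finset.univ.filter (fun u => e ∈ S u), G.w v ≤ N * W
  calc ∑ v ∈ Finset.univ.filter (fun u => e ∈ S u), G.w v
      ≤ (Finset.univ.filter (fun u => e ∈ S u)).card * W := by
        simpa using Finset.sum_le_card_nsmul _ _ W fun v _ => G.hw_upper v
    _ ≤ N * W := by
        gcongr
        · linarith [G.hW]
        · exact (Finset.card_filter_le _ _).trans (by simp)

theorem psiHat_load_le (hN : 0 < N) {k : ℕ} (hk : k ≤ d) (e : Fin E) :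
    psiHat k (G.load S e) ≤ Nat.factorial d * (N * W) ^ d := by
  have hNW : 1 ≤ (N : ℝ) * W := one_le_mul_of_one_le_of_one_le (mod_cast hN) G.hW
  calc psiHat k (G.load S e) ≤ Nat.factorial k * (G.load S e).sum ^ k :=
        psiHat_le_factorial_mul_sum_pow k (G.load_nonneg S e)
    _ ≤ Nat.factorial d * (N * W) ^ k := by
        have := Multiset.sum_nonneg (G.load_nonneg S e)
        gcongr
        exact G.load_sum_le S e
    _ ≤ Nat.factorial d * (N * W) ^ d := by gcongr

theorem hlatency_nonneg (e : Fin E) : 0 ≤ G.hlatency S e :=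
  Finset.sum_nonneg fun k _ => mul_nonneg (G.ha_nonneg e k) (psiHat_nonneg k (G.load_nonneg S e))

theorem exists_coeff_pos (e : Fin E) : ∃ k ≤ d, 0 < G.a e k := by
  have hsum : ∑ _k ∈ Finset.range (d + 1), (0 : ℝ) < ∑ k ∈ Finset.range (d + 1), G.a e k := by
    simpa using G.ha_pos e
  obtain ⟨k, hk, hpos⟩ := Finset.exists_lt_of_sum_lt hsum
  exact ⟨k, Finset.mem_range_succ_iff.1 hk, hpos⟩

theorem coeff_le_hlatency {u : Fin N} {e : Fin E} (he : e ∈ S u) {k : ℕ} (hk : k ≤ d) :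
    G.a e k ≤ G.hlatency S e := by
  have hpsi : 1 ≤ psiHat k (G.load S e) :=
    one_le_psiHat k (G.load_nonneg S e) (G.w_mem_load S he) (G.hw_lower u)
  calc G.a e k ≤ G.a e k * psiHat k (G.load S e) := le_mul_of_one_le_right (G.ha_nonneg e k) hpsi
    _ ≤ G.hlatency S e :=
        Finset.single_le_sum (f := fun k => G.a e k * psiHat k (G.load S e))
          (fun k _ => mul_nonneg (G.ha_nonneg e k) (psiHat_nonneg k (G.load_nonneg S e)))
          (Finset.mem_range_succ_iff.2 hk)

theorem hlatency_le (hN : 0 < N) {e₀ : Fin E} {k₀ : ℕ} (hk₀ : k₀ ≤ d) (hpos : 0 < G.a e₀ k₀)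
    (e : Fin E) :
    G.hlatency S e ≤ Nat.factorial (1 + d) * (N * W) ^ d * (A * G.a e₀ k₀) := by
  calc G.hlatency S e
      ≤ ∑ _k ∈ Finset.range (d + 1), A * G.a e₀ k₀ * (Nat.factorial d * (N * W) ^ d) := by
        refine Finset.sum_le_sum fun k hk => ?_
        have hkd : k ≤ d := Finset.mem_range_succ_iff.1 hk
        exact mul_le_mul (G.hA_bound e₀ e k₀ k hk₀ hkd hpos) (G.psiHat_load_le S hN hkd e)
          (psiHat_nonneg k (G.load_nonneg S e)) (mul_pos G.hA_pos hpos).le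
    _ = Nat.factorial (1 + d) * (N * W) ^ d * (A * G.a e₀ k₀) := by
        rw [Finset.sum_const, Finset.card_range, nsmul_eq_mul, add_comm 1 d, Nat.factorial_succ]
        push_cast
        ring

theorem coeff_le_hcost {u : Fin N} {e : Fin E} (he : e ∈ S u) {k : ℕ} (hk : k ≤ d) :
    G.a e k ≤ G.hcost S u := by
  rw [hcost_eq]
  calc G.a e k ≤ G.hlatency S e := G.coeff_le_hlatency S he hk
    _ ≤ ∑ e ∈ S u, G.hlatency S e :=
        Finset.single_le_sum (fun e _ => G.hlatency_nonneg S e) he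
    _ ≤ G.w u * ∑ e ∈ S u, G.hlatency S e :=
        le_mul_of_one_le_left (Finset.sum_nonneg fun e _ => G.hlatency_nonneg S e) (G.hw_lower u)

theorem hcost_le (hN : 0 < N) {e₀ : Fin E} {k₀ : ℕ} (hk₀ : k₀ ≤ d) (hpos : 0 < G.a e₀ k₀)
    (u : Fin N) :
    G.hcost S u ≤ E * A * Nat.factorial (1 + d) * N ^ d * W ^ (d + 1) * G.a e₀ k₀ := by
  have hW : 0 ≤ W := zero_le_one.trans G.hW
  have hbound := G.hlatency_le S hN hk₀ hpos
  rw [hcost_eq]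
  calc G.w u * ∑ e ∈ S u, G.hlatency S e
      ≤ W * ((S u).card * (Nat.factorial (1 + d) * (N * W) ^ d * (A * G.a e₀ k₀))) := by
        gcongr
        · exact Finset.sum_nonneg fun e _ => G.hlatency_nonneg S e
        · exact G.hw_upper u
        · simpa using Finset.sum_le_card_nsmul _ _ _ fun e _ => hbound e
    _ ≤ W * (E * (Nat.factorial (1 + d) * (N * W) ^ d * (A * G.a e₀ k₀))) := by
        have := (mul_pos G.hA_pos hpos).le
        gcongr
        exact (Finset.card_le_univ _).trans (by simp)
    _ = E * A * Nat.factorial (1 + d) * N ^ d * W ^ (d + 1) * G.a e₀ k₀ := by ring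

theorem hcost_le_mul_hcost (hS : G.IsProfile S) (u v : Fin N) :
    G.hcost S v ≤ E * A * Nat.factorial (1 + d) * N ^ d * W ^ (d + 1) * G.hcost S u := by
  obtain ⟨e, he⟩ := G.strat_valid u (S u) (hS u)
  obtain ⟨k, hk, hpos⟩ := G.exists_coeff_pos e
  calc G.hcost S v ≤ E * A * Nat.factorial (1 + d) * N ^ d * W ^ (d + 1) * G.a e k :=
        G.hcost_le S u.pos hk hpos v
    _ ≤ E * A * Nat.factorial (1 + d) * N ^ d * W ^ (d + 1) * G.hcost S u := by
        have := G.hA_pos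
        have := zero_le_one.trans G.hW
        gcongr
        exact G.coeff_le_hcost S he hk

variable {G S} in
theorem AlgOneStep.mul_hcost_le_sub {ε : ℝ} {S' : Profile N E} {ut : Fin N}
    {sstar : Fin N → Finset (Fin E)} (h : G.AlgOneStep ε S S' ut sstar) (hε : ε < 1) :
    ε * G.hcost S ut ≤ G.hcost S ut - G.hcost (Function.update S ut (sstar ut)) ut := by
  have hgt := h.2.1
  rw [gt_iff_lt, one_div, inv_mul_lt_iff₀ (sub_pos.2 hε)] at hgt
  linarith

end WCGame

open WCGame in
theorem algOne_step_decrement_general_general {N E d : ℕ} {W A : ℝ}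
    (G : WCGame N E d W A) (ε : ℝ) (hε0 : 0 < ε) (hε1 : ε < 1)
    (S S' : Profile N E) (hS : G.IsProfile S)
    (ut : Fin N) (sstar : Fin N → Finset (Fin E))
    (hstep : G.AlgOneStep ε S S' ut sstar) :
    ∀ u : Fin N, G.hcost S ut - G.hcost (Function.update S ut (sstar ut)) ut ≥
      ε / ((E : ℝ) * A * (Nat.factorial (1 + d) : ℝ) * (N : ℝ) ^ d * W ^ (d + 1)) *
        G.hcost S u := by
  intro u
  set μ : ℝ := E * A * Nat.factorial (1 + d) * N ^ d * W ^ (d + 1)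
  obtain ⟨e, -⟩ := G.strat_valid ut (S ut) (hS ut)
  have hμ : 0 < μ := by
    have := G.hA_pos
    have : (0 : ℝ) < E := Nat.cast_pos.2 e.pos
    have : (0 : ℝ) < N := Nat.cast_pos.2 ut.pos
    have : (0 : ℝ) < W := zero_lt_one.trans_le G.hW
    positivity
  calc ε / μ * G.hcost S u ≤ ε / μ * (μ * G.hcost S ut) := by
        gcongr
        exact G.hcost_le_mul_hcost S hS ut u
    _ = ε * G.hcost S ut := by field_simp
    _ ≤ G.hcost S ut - G.hcost (Function.update S ut (sstar ut)) ut :=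
        hstep.mul_hcost_le_sub hε1

open WCGame in
/-- Lemma 8: if `S` is not a `1/(1−ε)`-approximate pure Nash equilibrium of `Γ̂` and `S'`
is obtained from `S` by an Algorithm 1 step with chosen player `ut` and best response
`sstar ut`, then for every player `u`,
`ĉ_{ut}(S) − ĉ_{ut}(s*_{ut}, S₋_{ut}) ≥ (ε/μ)·ĉ_u(S)` with `μ = E·A·(1+d)!·N^d·W^{d+1}`. -/
theorem algOne_step_decrement_general {N E d : ℕ} {W A : ℝ}
    (G : WCGame N E d W A) (ε : ℝ) (hε0 : 0 < ε) (hε1 : ε < 1)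
    (S S' : Profile N E) (hS : G.IsProfile S)
    (hnot : ¬ G.IsApproxPNE G.hcost (1 / (1 - ε)) S)
    (ut : Fin N) (sstar : Fin N → Finset (Fin E))
    (hstep : G.AlgOneStep ε S S' ut sstar) :
    ∀ u : Fin N, G.hcost S ut - G.hcost (Function.update S ut (sstar ut)) ut ≥
      ε / ((E : ℝ) * A * (Nat.factorial (1 + d) : ℝ) * (N : ℝ) ^ d * W ^ (d + 1)) *
        G.hcost S u :=
  algOne_step_decrement_general_general G ε hε0 hε1 S S' hS ut sstar hstep
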